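/- Let c = Σ_{k≥0} k! x1^k be the Ferfera series and for n ≥ 1 define the polynomial a_n := Σ_{η ∈ X*, deg(η) = n} (S a_η)(−c) · η, i.e., the degree-n homogeneous component of the group inverse (−c)^{∘−1}. Then for continuous functions α, β on [0, ω] and u := {u0 = α, u1 = β}, the functions a_n(t) := F_{a_n}[u](t) are exactly the coefficient functions of the formal power series solution Φ(t; 0; r; u) = Σ_{n≥1} a_n(t) r^n of the Abel equation ż(t) = α(t) z³(t) + β(t) z²(t) with z(0) = r, where a_1(0) = 1 and a_n(0) = 0 for n > 1. -/

import Mathlib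

open scoped TensorProduct

noncomputable section

namespace Paper

/-- Words over the alphabet `X = {x0, x1}`, encoded as lists over `Fin 2`
(`0` stands for the letter `x0` and `1` for the letter `x1`). -/
abbrev Word : Type := List (Fin 2)

/-- Formal power series `ℝ⟨⟨X⟩⟩`, given by their coefficient functions `η ↦ ⟨c,η⟩`. -/
abbrev Series : Type := Word → ℝ

/-- The left shift `x_i⁻¹(c)`. -/
def lshift (i : Fin 2) (c : Series) : Series := fun w => c (i :: w)

/-- Left concatenation `x_i c` of the letter `x_i` onto every word of `c`. -/
def lconcat (i : Fin 2) (c : Series) : Series := fun w =>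
  match w with
  | [] => 0
  | j :: v => if j = i then c v else 0

/-- Right concatenation `p x_i` of the letter `x_i` onto every word of `p`. -/
def rconcat {R : Type*} [Zero R] (i : Fin 2) (p : Word → R) : Word → R := fun w =>
  if w.getLast? = some i then p w.dropLast else 0

/-- The series of a single word. -/
def ind (η : Word) : Series := fun w => if w = η then 1 else 0

/-- The empty word as a series, the unit `∅` (often written `1`). -/
def one : Series := ind []

/-- The shuffle product, defined coefficientwise by the recursion
`⟨c ⧢ d, ∅⟩ = ⟨c,∅⟩⟨d,∅⟩` and `⟨c ⧢ d, x_i w⟩ = ⟨x_i⁻¹(c) ⧢ d, w⟩ + ⟨c ⧢ x_i⁻¹(d), w⟩`,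
which is the bilinear (and ultrametrically continuous) extension of the recursive
shuffle product of words. -/
def shuffleFn : Series → Series → Word → ℝ
  | c, d, [] => c [] * d []
  | c, d, i :: w => shuffleFn (lshift i c) d w + shuffleFn c (lshift i d) w

/-- The shuffle product on `ℝ⟨⟨X⟩⟩`. -/
def sh (c d : Series) : Series := shuffleFn c d

/-- The map `φ_d(x_i)` for the modified composition product:
`φ_d(x0)(e) = x0 e` and `φ_d(x1)(e) = x1 e + x0 (d ⧢ e)`. -/
def phiLetter (d : Series) (i : Fin 2) (e : Series) : Series :=
  if i = 0 then lconcat 0 e else lconcat 1 e + lconcat 0 (sh d e)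

/-- `φ_d(η)`, the algebra-homomorphism extension determined by
`φ_d(x_i η) = φ_d(x_i) ∘ φ_d(η)` and `φ_d(∅) = id`. -/
def phi (d : Series) : Word → Series → Series
  | [], e => e
  | i :: η, e => phiLetter d i (phi d η e)

/-- The modified composition product `c ∘̃ d = Σ_η ⟨c,η⟩ φ_d(η)(1)`. -/
def mcomp (c d : Series) : Series := fun w => ∑' η : Word, c η * phi d η one w

/-- The map `ψ_d(x_i)` for the composition product:
`ψ_d(x0)(e) = x0 e` and `ψ_d(x1)(e) = x0 (d ⧢ e)`. -/
def psiLetter (d : Series) (i : Fin 2) (e : Series) : Series :=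
  if i = 0 then lconcat 0 e else lconcat 0 (sh d e)

/-- `ψ_d(η)`, determined by `ψ_d(x_i η) = ψ_d(x_i) ∘ ψ_d(η)` and `ψ_d(∅) = id`. -/
def psi (d : Series) : Word → Series → Series
  | [], e => e
  | i :: η, e => psiLetter d i (psi d η e)

/-- The composition product `c ∘ d = Σ_η ⟨c,η⟩ ψ_d(η)(1)`. -/
def comp (c d : Series) : Series := fun w => ∑' η : Word, c η * psi d η one w

/-- The group operation on `ℝ⟨⟨X_δ⟩⟩ = {δ + c}`, transported to the `c`-parts:
`c_δ ∘ d_δ = δ + (d + c ∘̃ d)`. -/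
def gop (c d : Series) : Series := d + mcomp c d

/-- The Ferfera series `c = Σ_{k ≥ 0} k! x1^k`. -/
def ferfera : Series := fun w =>
  if w = List.replicate w.length (1 : Fin 2) then (Nat.factorial w.length : ℝ) else 0

/-- The degree of a word, `deg(η) = 2|η|_{x0} + |η|_{x1} + 1`. -/
def degW (η : Word) : ℕ := 2 * η.count 0 + η.count 1 + 1

/-- The output feedback Hopf algebra `H`: the free unital commutative `ℝ`-algebra on the
coordinate functions `a_η`, realized as polynomials in commuting variables indexed by words. -/
abbrev H : Type := MvPolynomial Word ℝ

/-- The coordinate function `a_η`. -/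
def aw (η : Word) : H := MvPolynomial.X η

/-- Character (pointwise) evaluation of elements of `H` at a series `c`:
`(a_{η₁} ⋯ a_{η_l})(c) = ⟨c,η₁⟩ ⋯ ⟨c,η_l⟩`, extended as an algebra map. -/
def evalS (c : Series) : H →ₐ[ℝ] ℝ := MvPolynomial.aeval c

/-- Evaluation of `H ⊗ H` at a pair of series: `(p ⊗ q)(c,d) = p(c) q(d)`. -/
def evalPair (c d : Series) : H ⊗[ℝ] H →ₗ[ℝ] ℝ :=
  (LinearMap.mul' ℝ ℝ).comp (TensorProduct.map (evalS c).toLinearMap (evalS d).toLinearMap)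

/-- The counit `ε` of `H`: `ε(a_η) = 0`, `ε(1) = 1`. -/
def counit : H →ₐ[ℝ] ℝ := evalS 0

/-- The defining property of the full coproduct `Δ` of the output feedback Hopf algebra:
`Δ a_η = Δ̃ a_η + 1 ⊗ a_η` where `Δ̃ a_η (c,d) = ⟨c ∘̃ d, η⟩`, i.e.
`(Δ a_η)(c,d) = ⟨c ∘̃ d, η⟩ + ⟨d, η⟩` for all series `c, d`; `Δ` is an algebra morphism. -/
def IsFBCoproduct (Δ : H →ₐ[ℝ] (H ⊗[ℝ] H)) : Prop :=
  ∀ (η : Word) (c d : Series), evalPair c d (Δ (aw η)) = mcomp c d η + d η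

/-- `S` is an antipode for the coproduct `Δ` (with counit `ε`):
`μ ∘ (S ⊗ id) ∘ Δ = 1·ε = μ ∘ (id ⊗ S) ∘ Δ`. -/
def IsAntipode (Δ : H →ₐ[ℝ] (H ⊗[ℝ] H)) (S : H →ₗ[ℝ] H) : Prop :=
  (∀ p : H, LinearMap.mul' ℝ H (TensorProduct.map S LinearMap.id (Δ p)) = counit p • 1) ∧
  (∀ p : H, LinearMap.mul' ℝ H (TensorProduct.map LinearMap.id S (Δ p)) = counit p • 1)

/-- The right-augmentation operator `θ̃_i`, the derivation on `H` with `θ̃_i(a_η) = a_{η x_i}`. -/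
def thetaR (i : Fin 2) : Derivation ℝ H H :=
  MvPolynomial.mkDerivation ℝ fun η => aw (η ++ [i])

/-- The left-augmentation operator `θ_i`, the derivation on `H` with `θ_i(a_η) = a_{x_i η}`. -/
def thetaL (i : Fin 2) : Derivation ℝ H H :=
  MvPolynomial.mkDerivation ℝ fun η => aw (i :: η)

/-- The multiplication operator `κ_∅(h) = h · a_∅`. -/
def kappaE : H →ₗ[ℝ] H := LinearMap.mulRight ℝ (aw [])

/-- The shuffle coefficient `⟨ξ ⧢ ν, η⟩`. -/
def shCoeff (ξ ν η : Word) : ℝ := sh (ind ξ) (ind ν) η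

/-- The finite set of words of length `n`. -/
def wordsLen (n : ℕ) : Finset Word :=
  (Finset.univ : Finset (Fin n → Fin 2)).image List.ofFn

/-- The deshuffle coproduct `Δ_⧢ a_η = Σ_{ξ,ν} ⟨ξ ⧢ ν, η⟩ a_ξ ⊗ a_ν`
(the unique coproduct satisfying `Δ_⧢ a_∅ = a_∅ ⊗ a_∅` and the coderivation recursions
with respect to the augmentation operators). -/
def deshuffle (η : Word) : H ⊗[ℝ] H :=
  ∑ k ∈ Finset.range (η.length + 1), ∑ ξ ∈ wordsLen k, ∑ ν ∈ wordsLen (η.length - k),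
    shCoeff ξ ν η • (aw ξ ⊗ₜ[ℝ] aw ν)

/-- Iterated integrals: `E_∅[u](t) = 1`, `E_{x_i η}[u](t) = ∫₀ᵗ u_i(s) E_η[u](s) ds`. -/
def E (u : Fin 2 → ℝ → ℝ) : Word → ℝ → ℝ
  | [], _ => 1
  | i :: η, t => ∫ s in (0:ℝ)..t, u i s * E u η s

/-!
Evaluating the antipode identity `μ ∘ (S ⊗ id) ∘ Δ = ε` at `d = -c` shows that the coefficients
`e_η = (S a_η)(-c)` satisfy `e ∘̃ (-c) = c`, i.e. `δ + e` is the inverse of `δ - c`. The map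
`· ∘̃ d` is an injective shuffle-algebra homomorphism intertwining the left shifts, and the Ferfera
series satisfies `c ⧢ c = x₁⁻¹(c)` and `x₀⁻¹(c) = 0`; hence `e_∅ = 1`, `x₁⁻¹(e) = e ⧢ e` and
`x₀⁻¹(e) = e ⧢ e ⧢ e`. The Fliess operator turns shuffles into products and satisfies
`d/dt F_c = u₀ F_{x₀⁻¹(c)} + u₁ F_{x₁⁻¹(c)}`. Since shuffling adds degrees up to a shift by one,
`Φ(a) = Σₙ F_{aₙ} rⁿ`, built from the homogeneous components `aₙ` of `a`, satisfies
`r Φ(a ⧢ b) = Φ(a) Φ(b)`; so the shift relations of `e` become `Φ(e)' = u₀ Φ(e)³ + u₁ Φ(e)²`.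
-/

open Finset.HasAntidiagonal

def wordsUpTo : ℕ → Finset Word
  | 0 => {[]}
  | n + 1 => insert [] ((Finset.univ ×ˢ wordsUpTo n).image fun p => p.1 :: p.2)

theorem mem_wordsUpTo {n : ℕ} {w : Word} : w ∈ wordsUpTo n ↔ w.length ≤ n := by
  induction n generalizing w with
  | zero => simp [wordsUpTo]
  | succ n ih => cases w <;> simp [wordsUpTo, ih]

theorem sum_wordsUpTo_succ {M : Type*} [AddCommMonoid M] (n : ℕ) (f : Word → M) :
    ∑ w ∈ wordsUpTo (n + 1), f w = f [] + ∑ i, ∑ τ ∈ wordsUpTo n, f (i :: τ) := by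
  rw [wordsUpTo, Finset.sum_insert (by simp), Finset.sum_image (by simp), Finset.sum_product]

theorem degW_nil : degW [] = 1 := rfl

theorem degW_cons_zero (η : Word) : degW (0 :: η) = degW η + 2 := by
  rw [degW, degW, List.count_cons_self, List.count_cons_of_ne (by decide)]; ring

theorem degW_cons_one (η : Word) : degW (1 :: η) = degW η + 1 := by
  rw [degW, degW, List.count_cons_self, List.count_cons_of_ne (by decide)]; ring

theorem degW_cons (i : Fin 2) (η : Word) : degW (i :: η) = degW η + (degW [i] - 1) := by
  fin_cases i
  · exact degW_cons_zero η
  · exact degW_cons_one η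

theorem degW_singleton_sub_one_mem_Icc (i : Fin 2) : degW [i] - 1 ∈ Set.Icc 1 2 := by
  fin_cases i <;> decide

theorem length_lt_degW (η : Word) : η.length < degW η := by
  induction η with
  | nil => simp [degW_nil]
  | cons i η ih =>
    obtain ⟨h₁, h₂⟩ := degW_singleton_sub_one_mem_Icc i
    rw [List.length_cons, degW_cons]; omega

theorem degW_le_two_mul_length (η : Word) : degW η ≤ 2 * η.length + 1 := by
  induction η with
  | nil => simp [degW_nil]
  | cons i η ih =>
    obtain ⟨h₁, h₂⟩ := degW_singleton_sub_one_mem_Icc i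
    rw [List.length_cons, degW_cons]; omega

/-! ### The shuffle product -/

theorem sh_nil (a b : Series) : sh a b [] = a [] * b [] := rfl

theorem sh_cons (a b : Series) (i : Fin 2) (w : Word) :
    sh a b (i :: w) = sh (lshift i a) b w + sh a (lshift i b) w := rfl

theorem lshift_sh (i : Fin 2) (a b : Series) :
    lshift i (sh a b) = sh (lshift i a) b + sh a (lshift i b) := rfl

theorem lshift_add (i : Fin 2) (a b : Series) : lshift i (a + b) = lshift i a + lshift i b := rfl

theorem lshift_smul (i : Fin 2) (r : ℝ) (a : Series) : lshift i (r • a) = r • lshift i a := rfl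

theorem sh_comm (a b : Series) : sh a b = sh b a := by
  funext w
  induction w generalizing a b with
  | nil => exact mul_comm _ _
  | cons i w ih => rw [sh_cons, sh_cons, ih, ih (lshift i b), add_comm]

theorem sh_add_left (a a' b : Series) : sh (a + a') b = sh a b + sh a' b := by
  funext w
  induction w generalizing a a' b with
  | nil => exact add_mul _ _ _
  | cons i w ih =>
    simp only [sh_cons, Pi.add_apply, lshift_add, ih]
    ring

theorem sh_smul_left (r : ℝ) (a b : Series) : sh (r • a) b = r • sh a b := by
  funext w
  induction w generalizing a b with
  | nil => exact mul_assoc _ _ _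
  | cons i w ih =>
    simp only [sh_cons, Pi.smul_apply, lshift_smul, ih, smul_add]

def shₗ : Series →ₗ[ℝ] Series →ₗ[ℝ] Series :=
  LinearMap.mk₂ ℝ sh sh_add_left sh_smul_left
    (fun a b b' => by rw [sh_comm, sh_add_left, sh_comm b, sh_comm b'])
    (fun r a b => by rw [sh_comm, sh_smul_left, sh_comm b])

theorem shₗ_apply (a b : Series) : shₗ a b = sh a b := rfl

theorem sh_add_right (a b b' : Series) : sh a (b + b') = sh a b + sh a b' := map_add (shₗ a) b b'

theorem sh_smul_right (r : ℝ) (a b : Series) : sh a (r • b) = r • sh a b := map_smul (shₗ a) r b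

theorem sh_zero_left (b : Series) : sh 0 b = 0 := LinearMap.map_zero₂ shₗ b

theorem sh_zero_right (a : Series) : sh a 0 = 0 := map_zero (shₗ a)

theorem sh_neg_left (a b : Series) : sh (-a) b = -sh a b := LinearMap.map_neg₂ shₗ a b

theorem sh_sum_left {ι : Type*} (s : Finset ι) (f : ι → Series) (b : Series) :
    sh (∑ k ∈ s, f k) b = ∑ k ∈ s, sh (f k) b := by
  simp only [← shₗ_apply, map_sum, LinearMap.sum_apply]

theorem sh_sum_right {ι : Type*} (s : Finset ι) (a : Series) (f : ι → Series) :
    sh a (∑ k ∈ s, f k) = ∑ k ∈ s, sh a (f k) := map_sum (shₗ a) f s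

theorem sh_assoc (a b c : Series) : sh (sh a b) c = sh a (sh b c) := by
  funext w
  induction w generalizing a b c with
  | nil => exact mul_assoc _ _ _
  | cons i w ih =>
    simp only [sh_cons, lshift_sh, sh_add_left, sh_add_right, Pi.add_apply, ih]
    ring

theorem sh_congr {a a' b b' : Series} {w : Word}
    (ha : ∀ v : Word, v.length ≤ w.length → a v = a' v)
    (hb : ∀ v : Word, v.length ≤ w.length → b v = b' v) : sh a b w = sh a' b' w := by
  induction w generalizing a a' b b' with
  | nil => rw [sh_nil, sh_nil, ha [] le_rfl, hb [] le_rfl]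
  | cons i w ih =>
    have hsucc : ∀ v : Word, v.length ≤ w.length → (i :: v).length ≤ (i :: w).length := by simp
    have hle : ∀ v : Word, v.length ≤ w.length → v.length ≤ (i :: w).length := by
      intro v hv; simp only [List.length_cons]; omega
    rw [sh_cons, sh_cons, ih (a := lshift i a) (a' := lshift i a')
        (fun v hv => ha _ (hsucc v hv)) (fun v hv => hb v (hle v hv)),
      ih (b := lshift i b) (b' := lshift i b')
        (fun v hv => ha v (hle v hv)) (fun v hv => hb _ (hsucc v hv))]

theorem exists_of_sh_ne_zero {a b : Series} {w : Word} (h : sh a b w ≠ 0) :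
    ∃ v₁ v₂ : Word, a v₁ ≠ 0 ∧ b v₂ ≠ 0 ∧ degW v₁ + degW v₂ = degW w + 1 ∧
      v₁.length + v₂.length = w.length := by
  induction w generalizing a b with
  | nil => exact ⟨[], [], left_ne_zero_of_mul h, right_ne_zero_of_mul h, rfl, rfl⟩
  | cons i w ih =>
    rw [sh_cons] at h
    rcases eq_or_ne (sh (lshift i a) b w) 0 with h0 | h
    · rw [h0, zero_add] at h
      obtain ⟨v₁, v₂, h₁, h₂, hd, hl⟩ := ih h
      refine ⟨v₁, i :: v₂, h₁, h₂, ?_, by simp only [List.length_cons]; omega⟩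
      rw [degW_cons i v₂, degW_cons i w]; omega
    · obtain ⟨v₁, v₂, h₁, h₂, hd, hl⟩ := ih h
      refine ⟨i :: v₁, v₂, h₁, h₂, ?_, by simp only [List.length_cons]; omega⟩
      rw [degW_cons i v₁, degW_cons i w]; omega

/-! ### The modified composition product -/

theorem ind_apply (η w : Word) : ind η w = if w = η then 1 else 0 := rfl

theorem one_apply (w : Word) : one w = if w = [] then 1 else 0 := rfl

theorem lconcat_nil (i : Fin 2) (c : Series) : lconcat i c [] = 0 := rfl

theorem lconcat_cons (i j : Fin 2) (c : Series) (v : Word) :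
    lconcat i c (j :: v) = if j = i then c v else 0 := rfl

theorem phiLetter_zero (d e : Series) : phiLetter d 0 e = lconcat 0 e := if_pos rfl

theorem phiLetter_one (d e : Series) : phiLetter d 1 e = lconcat 1 e + lconcat 0 (sh d e) :=
  if_neg one_ne_zero

theorem phiLetter_apply_nil (d e : Series) (i : Fin 2) : phiLetter d i e [] = 0 := by
  fin_cases i <;> simp [phiLetter_zero, phiLetter_one, lconcat_nil]

theorem degW_lt_of_phi_one_ne_ind {d : Series} {η w : Word} (h : phi d η one w ≠ ind η w) :
    degW η < degW w := by
  induction η generalizing w with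
  | nil => exact absurd rfl h
  | cons i τ ih =>
    have hle : ∀ v, phi d τ one v ≠ 0 → degW τ ≤ degW v := fun v hv => by
      by_cases hvτ : v = τ
      · rw [hvτ]
      · exact (ih (by rwa [ind_apply, if_neg hvτ])).le
    obtain _ | ⟨j, v⟩ := w
    · exact absurd (phiLetter_apply_nil d _ i) (by simpa [phi, ind_apply] using h)
    -- Left are `(i, j) = (0, 0), (1, 0), (1, 1)`; for `(1, 0)` only the term
    -- `x₀ (d ⧢ φ_d(τ)(1))` of `φ_d(x₁ τ)(1)` contributes.
    fin_cases i <;> fin_cases j <;>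
      simp only [phi, phiLetter_zero, phiLetter_one, Pi.add_apply, lconcat_cons, ind_apply,
        List.cons.injEq, Fin.zero_eta, Fin.mk_one, Fin.isValue, one_ne_zero, zero_ne_one,
        ↓reduceIte, true_and, false_and, zero_add, add_zero, ne_eq, not_true_eq_false] at h ⊢
    · simpa [degW_cons_zero] using ih (by simpa [ind_apply] using h)
    · obtain ⟨v₁, v₂, -, h₂, hdeg, -⟩ := exists_of_sh_ne_zero h
      have := hle v₂ h₂
      have := length_lt_degW v₁
      rw [degW_cons_zero, degW_cons_one]; omega
    · simpa [degW_cons_one] using ih (by simpa [ind_apply] using h)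

theorem degW_le_of_phi_one_ne_zero {d : Series} {η w : Word} (h : phi d η one w ≠ 0) :
    degW η ≤ degW w := by
  by_cases hw : w = η
  · rw [hw]
  · exact (degW_lt_of_phi_one_ne_ind (by rwa [ind_apply, if_neg hw])).le

theorem phi_one_apply_self (d : Series) (η : Word) : phi d η one η = 1 := by
  by_contra h
  exact (degW_lt_of_phi_one_ne_ind (by rwa [ind_apply, if_pos rfl])).false

theorem mcomp_eq_sum {c d : Series} {w : Word} {N : ℕ} (hN : degW w ≤ N) :
    mcomp c d w = ∑ η ∈ wordsUpTo N, c η * phi d η one w := by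
  refine tsum_eq_sum fun η hη => ?_
  by_contra h
  have := degW_le_of_phi_one_ne_zero (right_ne_zero_of_mul h)
  have := length_lt_degW η
  exact hη (mem_wordsUpTo.2 (by omega))

theorem mcomp_nil (c d : Series) : mcomp c d [] = c [] := by
  rw [mcomp_eq_sum (N := 1) le_rfl, sum_wordsUpTo_succ]
  simp [phi, phiLetter_apply_nil, one_apply]

theorem mcomp_cons {c d : Series} {i : Fin 2} {w : Word} {N : ℕ} (hN : degW (i :: w) ≤ N + 1) :
    mcomp c d (i :: w) =
      ∑ j, ∑ τ ∈ wordsUpTo N, c (j :: τ) * phiLetter d j (phi d τ one) (i :: w) := by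
  rw [mcomp_eq_sum hN, sum_wordsUpTo_succ]
  simp [phi, one_apply]

theorem lshift_one_mcomp (c d : Series) : lshift 1 (mcomp c d) = mcomp (lshift 1 c) d := by
  funext w
  have hN : degW (1 :: w) ≤ degW w + 1 := (degW_cons_one w).le
  simp [lshift, mcomp_cons hN, mcomp_eq_sum (le_refl (degW w)), phiLetter_zero, phiLetter_one,
    lconcat_cons]

theorem lshift_zero_mcomp (c d : Series) :
    lshift 0 (mcomp c d) = mcomp (lshift 0 c) d + sh d (mcomp (lshift 1 c) d) := by
  funext w
  set N := 2 * w.length + 2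
  have hN : degW (0 :: w) ≤ N + 1 := by
    have := degW_le_two_mul_length w; rw [degW_cons_zero]; omega
  have hsum : ∀ v : Word, v.length ≤ w.length →
      (∑ τ ∈ wordsUpTo N, c (1 :: τ) • phi d τ one) v = mcomp (lshift 1 c) d v := by
    intro v hv
    have := degW_le_two_mul_length v
    rw [mcomp_eq_sum (N := N) (by omega), Finset.sum_apply]
    rfl
  simp only [lshift, mcomp_cons hN, Fin.sum_univ_two, phiLetter_zero, phiLetter_one, lconcat_cons,
    Pi.add_apply, Fin.isValue, ↓reduceIte, zero_ne_one, zero_add]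
  have := degW_le_two_mul_length w
  rw [mcomp_eq_sum (N := N) (by omega), ← sh_congr (fun _ _ => rfl) hsum, sh_sum_right]
  simp [sh_smul_right, lshift]

theorem mcomp_add_left (a b d : Series) : mcomp (a + b) d = mcomp a d + mcomp b d := by
  funext w
  simp [mcomp_eq_sum le_rfl, add_mul, Finset.sum_add_distrib]

theorem mcomp_sh (a b d : Series) : mcomp (sh a b) d = sh (mcomp a d) (mcomp b d) := by
  funext w
  induction hw : w.length using Nat.strong_induction_on generalizing w a b with
  | _ n ih =>
    obtain _ | ⟨i, v⟩ := w
    · simp only [mcomp_nil, sh_nil]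
    have ih' : ∀ v' : Word, v'.length ≤ v.length → ∀ a b,
        mcomp (sh a b) d v' = sh (mcomp a d) (mcomp b d) v' :=
      fun v' hv' a b => ih _ (by simp only [List.length_cons] at hw; omega) a b v' rfl
    fin_cases i
    · have hloc : ∀ v' : Word, v'.length ≤ v.length →
          mcomp (lshift 1 (sh a b)) d v' =
            (sh (mcomp (lshift 1 a) d) (mcomp b d) + sh (mcomp a d) (mcomp (lshift 1 b) d)) v' :=
        fun v' hv' => by
          rw [lshift_sh, mcomp_add_left, Pi.add_apply, Pi.add_apply, ih' _ hv',
            ih' _ hv']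
      calc mcomp (sh a b) d (0 :: v)
          = mcomp (lshift 0 (sh a b)) d v + sh d (mcomp (lshift 1 (sh a b)) d) v :=
            congrFun (lshift_zero_mcomp _ _) v
        _ = sh (mcomp (lshift 0 a) d) (mcomp b d) v + sh (mcomp a d) (mcomp (lshift 0 b) d) v
            + sh d (sh (mcomp (lshift 1 a) d) (mcomp b d)
                + sh (mcomp a d) (mcomp (lshift 1 b) d)) v := by
            rw [lshift_sh, mcomp_add_left, Pi.add_apply, ih' _ le_rfl, ih' _ le_rfl,
              sh_congr (fun _ _ => rfl) hloc]
        _ = sh (mcomp a d) (mcomp b d) (0 :: v) := by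
            rw [sh_cons, lshift_zero_mcomp, lshift_zero_mcomp, sh_add_left, sh_add_right,
              sh_add_right, sh_assoc, sh_comm (mcomp a d) (sh d _), sh_assoc,
              sh_comm (mcomp (lshift 1 b) d)]
            simp only [Pi.add_apply]; ring
    · calc mcomp (sh a b) d (1 :: v)
          = mcomp (lshift 1 (sh a b)) d v := congrFun (lshift_one_mcomp _ _) v
        _ = sh (mcomp a d) (mcomp b d) (1 :: v) := by
            rw [lshift_sh, mcomp_add_left, Pi.add_apply, ih' _ le_rfl, ih' _ le_rfl, sh_cons,
              lshift_one_mcomp, lshift_one_mcomp]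

theorem mcomp_left_injective (d : Series) : Function.Injective fun c => mcomp c d := by
  intro a b hab
  funext w
  induction hw : degW w using Nat.strong_induction_on generalizing w with
  | _ m ih =>
    have hterm : ∀ η ∈ wordsUpTo (degW w), a η * phi d η one w - b η * phi d η one w =
        if η = w then a w - b w else 0 := by
      intro η _
      split_ifs with hη
      · rw [hη, phi_one_apply_self, mul_one, mul_one]
      · by_cases hφ : phi d η one w = 0
        · rw [hφ, mul_zero, mul_zero, sub_zero]
        · have := degW_lt_of_phi_one_ne_ind (by rwa [ind_apply, if_neg (Ne.symm hη)])
          rw [ih _ (hw ▸ this) η rfl, sub_self]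
    have : mcomp a d w = mcomp b d w := congrFun hab w
    rw [mcomp_eq_sum le_rfl, mcomp_eq_sum le_rfl, ← sub_eq_zero, ← Finset.sum_sub_distrib,
      Finset.sum_congr rfl hterm, Finset.sum_ite_eq'] at this
    simpa [mem_wordsUpTo, (length_lt_degW w).le, sub_eq_zero] using this

/-! ### The antipode -/

theorem evalS_aw (d : Series) (η : Word) : evalS d (aw η) = d η := by
  simp [evalS, aw]

def rightEval (d : Series) : H ⊗[ℝ] H →ₗ[ℝ] H :=
  (TensorProduct.rid ℝ H).toLinearMap ∘ₗ TensorProduct.map LinearMap.id (evalS d).toLinearMap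

theorem rightEval_tmul (d : Series) (p q : H) : rightEval d (p ⊗ₜ q) = evalS d q • p := by
  simp [rightEval]

theorem evalS_rightEval (c d : Series) (x : H ⊗[ℝ] H) :
    evalS c (rightEval d x) = evalPair c d x := by
  induction x using TensorProduct.induction_on with
  | zero => simp
  | tmul p q => simp [rightEval_tmul, evalPair, mul_comm]
  | add x y hx hy => simp [hx, hy]

theorem evalS_mul'_map_id (S : H →ₗ[ℝ] H) (d : Series) (x : H ⊗[ℝ] H) :
    evalS d (LinearMap.mul' ℝ H (TensorProduct.map S LinearMap.id x)) =
      evalS d (S (rightEval d x)) := by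
  induction x using TensorProduct.induction_on with
  | zero => simp
  | tmul p q => simp [rightEval_tmul, mul_comm]
  | add x y hx hy => simp [hx, hy]

theorem rightEval_aw_of_isFBCoproduct {Δ : H →ₐ[ℝ] (H ⊗[ℝ] H)} (hΔ : IsFBCoproduct Δ)
    (d : Series) (η : Word) :
    rightEval d (Δ (aw η)) = ∑ η' ∈ wordsUpTo (degW η), phi d η' one η • aw η' + d η • 1 :=
  MvPolynomial.funext fun c => by
    change evalS c _ = evalS c _
    rw [evalS_rightEval, hΔ, mcomp_eq_sum le_rfl]
    simp [evalS_aw, mul_comm]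

theorem IsAntipode.map_one {Δ : H →ₐ[ℝ] (H ⊗[ℝ] H)} {S : H →ₗ[ℝ] H} (hS : IsAntipode Δ S) :
    S 1 = 1 := by
  simpa [Algebra.TensorProduct.one_def] using hS.1 1

/-- `δ + e` with `e_η = (S a_η)(d)` is the left inverse of `δ + d`: `e ∘̃ d + d = 0`. -/
theorem mcomp_evalS_antipode {Δ : H →ₐ[ℝ] (H ⊗[ℝ] H)} (hΔ : IsFBCoproduct Δ) {S : H →ₗ[ℝ] H}
    (hS : IsAntipode Δ S) (d : Series) : mcomp (fun η => evalS d (S (aw η))) d = -d := by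
  funext η
  have h := congrArg (evalS d) (hS.1 (aw η))
  rw [evalS_mul'_map_id, rightEval_aw_of_isFBCoproduct hΔ] at h
  simp only [map_add, map_sum, map_smul, hS.map_one, smul_eq_mul, map_one, mul_one, counit,
    evalS_aw, Pi.zero_apply, zero_smul, map_zero, mcomp_eq_sum le_rfl, mul_comm,
    Pi.neg_apply] at h ⊢
  linarith

/-! ### The Ferfera series -/

/-- The `a`-fold left shift `(x₁⁻¹)ᵃ(c)` of the Ferfera series `c`. -/
def shiftedFerfera (a : ℕ) : Series := fun w =>
  if w = List.replicate w.length 1 then ((w.length + a).factorial : ℝ) else 0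

theorem shiftedFerfera_zero : shiftedFerfera 0 = ferfera := rfl

theorem shiftedFerfera_nil (a : ℕ) : shiftedFerfera a [] = a.factorial := by
  simp [shiftedFerfera]

theorem shiftedFerfera_cons_one (a : ℕ) (w : Word) :
    shiftedFerfera a (1 :: w) = shiftedFerfera (a + 1) w := by
  simp [shiftedFerfera, List.replicate_succ, add_assoc, add_comm 1 a]

theorem shiftedFerfera_cons_zero (a : ℕ) (w : Word) : shiftedFerfera a (0 :: w) = 0 := by
  simp [shiftedFerfera, List.replicate_succ]

theorem lshift_one_shiftedFerfera (a : ℕ) :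
    lshift 1 (shiftedFerfera a) = shiftedFerfera (a + 1) :=
  funext (shiftedFerfera_cons_one a)

theorem lshift_zero_shiftedFerfera (a : ℕ) : lshift 0 (shiftedFerfera a) = 0 :=
  funext (shiftedFerfera_cons_zero a)

theorem factorial_mul_sh_shiftedFerfera (a b : ℕ) (w : Word) :
    ((a + b + 1).factorial : ℝ) * sh (shiftedFerfera a) (shiftedFerfera b) w =
      a.factorial * b.factorial * shiftedFerfera (a + b + 1) w := by
  induction w generalizing a b with
  | nil => simp only [sh_nil, shiftedFerfera_nil]; ring
  | cons i w ih =>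
    fin_cases i <;> simp only [Fin.zero_eta, Fin.mk_one, Fin.isValue]
    · simp [sh_cons, lshift_zero_shiftedFerfera, shiftedFerfera_cons_zero, sh_zero_left,
        sh_zero_right]
    · have h₁ := ih (a + 1) b
      have h₂ := ih a (b + 1)
      rw [show a + 1 + b + 1 = a + b + 1 + 1 by ring, Nat.factorial_succ (a + b + 1),
        Nat.factorial_succ a] at h₁
      rw [show a + (b + 1) + 1 = a + b + 1 + 1 by ring, Nat.factorial_succ (a + b + 1),
        Nat.factorial_succ b] at h₂
      rw [sh_cons, lshift_one_shiftedFerfera, lshift_one_shiftedFerfera, shiftedFerfera_cons_one]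
      push_cast at h₁ h₂ ⊢
      refine mul_left_cancel₀ (by positivity : (a + b + 1 + 1 : ℝ) ≠ 0) ?_
      linear_combination h₁ + h₂

theorem sh_ferfera_self : sh ferfera ferfera = lshift 1 ferfera := by
  funext w
  simpa [← shiftedFerfera_zero, lshift_one_shiftedFerfera] using
    factorial_mul_sh_shiftedFerfera 0 0 w

theorem lshift_zero_ferfera : lshift 0 ferfera = 0 := lshift_zero_shiftedFerfera 0

/-- The coefficient recursions of the generating series of the Abel equation
`ż = u₀ z³ + u₁ z²`, `z(0) = 1`. -/
structure IsAbelSeries (e : Series) : Prop where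
  apply_nil : e [] = 1
  lshift_one : lshift 1 e = sh e e
  lshift_zero : lshift 0 e = sh (sh e e) e

theorem isAbelSeries_of_mcomp_neg_ferfera {e : Series} (he : mcomp e (-ferfera) = ferfera) :
    IsAbelSeries e where
  apply_nil := by rw [← mcomp_nil e (-ferfera), he, ← shiftedFerfera_zero, shiftedFerfera_nil]; simp
  lshift_one := mcomp_left_injective (-ferfera) <| by
    simp only [← lshift_one_mcomp, mcomp_sh, he, sh_ferfera_self]
  lshift_zero := mcomp_left_injective (-ferfera) <| by
    have h := lshift_zero_mcomp e (-ferfera)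
    rw [he, lshift_zero_ferfera, ← lshift_one_mcomp, he, sh_neg_left, eq_comm, add_neg_eq_zero] at h
    simp only [h, mcomp_sh, he, sh_ferfera_self, sh_comm (lshift 1 ferfera)]

/-! ### Fliess operators -/

theorem E_nil (u : Fin 2 → ℝ → ℝ) (t : ℝ) : E u [] t = 1 := rfl

theorem E_apply_zero (u : Fin 2 → ℝ → ℝ) {η : Word} (hη : η ≠ []) : E u η 0 = 0 := by
  obtain _ | ⟨i, η⟩ := η
  · exact absurd rfl hη
  · exact intervalIntegral.integral_same

theorem hasDerivAt_E_cons {u : Fin 2 → ℝ → ℝ} {i : Fin 2} {η : Word} (hu : Continuous (u i))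
    (hη : Continuous (E u η)) (t : ℝ) : HasDerivAt (E u (i :: η)) (u i t * E u η t) t :=
  ((hu.mul hη).integral_hasStrictDerivAt 0 t).hasDerivAt

theorem continuous_E {u : Fin 2 → ℝ → ℝ} (hu : ∀ i, Continuous (u i)) (η : Word) :
    Continuous (E u η) := by
  induction η with
  | nil => exact continuous_const
  | cons i η ih =>
    exact continuous_iff_continuousAt.2 fun t => (hasDerivAt_E_cons (hu i) ih t).continuousAt

theorem E_eqOn_of_eqOn {u v : Fin 2 → ℝ → ℝ} {ω : ℝ} (h : ∀ i, Set.EqOn (u i) (v i) (Set.Icc 0 ω))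
    (η : Word) : Set.EqOn (E u η) (E v η) (Set.Icc 0 ω) := by
  induction η with
  | nil => exact fun _ _ => rfl
  | cons i η ih =>
    intro t ht
    refine intervalIntegral.integral_congr fun s hs => ?_
    rw [Set.uIcc_of_le ht.1] at hs
    have hs' : s ∈ Set.Icc 0 ω := ⟨hs.1, hs.2.trans ht.2⟩
    simp only [h i hs', ih hs']

def fliess (u : Fin 2 → ℝ → ℝ) (c : Series) (t : ℝ) : ℝ := ∑' η : Word, c η * E u η t

def SupportLengthLT (c : Series) (N : ℕ) : Prop := ∀ w : Word, c w ≠ 0 → w.length < N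

namespace SupportLengthLT

variable {a b c : Series} {M N : ℕ}

theorem eq_zero (hc : SupportLengthLT c 0) : c = 0 :=
  funext fun w => by_contra fun h => (hc w h).not_ge (Nat.zero_le _)

theorem mono (hc : SupportLengthLT c N) (hNM : N ≤ M) : SupportLengthLT c M :=
  fun w hw => (hc w hw).trans_le hNM

theorem lshift (hc : SupportLengthLT c N) (i : Fin 2) : SupportLengthLT (lshift i c) (N - 1) :=
  fun w hw => by have := hc _ hw; simp only [List.length_cons] at this; omega

theorem sh (ha : SupportLengthLT a N) (hb : SupportLengthLT b M) :
    SupportLengthLT (sh a b) (N + M) := fun w hw => by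
  obtain ⟨v₁, v₂, h₁, h₂, -, hl⟩ := exists_of_sh_ne_zero hw
  have := ha v₁ h₁; have := hb v₂ h₂; omega

theorem add (ha : SupportLengthLT a N) (hb : SupportLengthLT b N) : SupportLengthLT (a + b) N :=
  fun w hw => by
    by_cases h : a w = 0
    · exact hb w (by simpa [h] using hw)
    · exact ha w h

theorem sum {ι : Type*} {s : Finset ι} {f : ι → Series}
    (hf : ∀ k ∈ s, SupportLengthLT (f k) N) : SupportLengthLT (∑ k ∈ s, f k) N :=
  fun w hw => by_contra fun hlt => hw <| by
    rw [Finset.sum_apply]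
    exact Finset.sum_eq_zero fun k hk => by_contra fun h => hlt (hf k hk w h)

end SupportLengthLT

section Fliess

variable {u : Fin 2 → ℝ → ℝ} {a b c : Series} {M N : ℕ}

theorem fliess_eq_sum (hc : SupportLengthLT c N) (t : ℝ) :
    fliess u c t = ∑ η ∈ wordsUpTo N, c η * E u η t :=
  tsum_eq_sum fun η hη => by
    by_contra h
    exact hη (mem_wordsUpTo.2 (hc η (left_ne_zero_of_mul h)).le)

theorem fliess_apply_zero (u : Fin 2 → ℝ → ℝ) (c : Series) : fliess u c 0 = c [] := by
  rw [fliess, tsum_eq_single [] fun η hη => by rw [E_apply_zero u hη, mul_zero], E_nil, mul_one]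

theorem fliess_zero (u : Fin 2 → ℝ → ℝ) : fliess u 0 = 0 := by
  funext t; simp [fliess]

theorem fliess_add (ha : SupportLengthLT a N) (hb : SupportLengthLT b N) (t : ℝ) :
    fliess u (a + b) t = fliess u a t + fliess u b t := by
  simp only [fliess_eq_sum (ha.add hb), fliess_eq_sum ha, fliess_eq_sum hb, Pi.add_apply, add_mul,
    Finset.sum_add_distrib]

theorem hasDerivAt_fliess (hu : ∀ i, Continuous (u i)) (hc : SupportLengthLT c N) (t : ℝ) :
    HasDerivAt (fliess u c) (∑ i, u i t * fliess u (lshift i c) t) t := by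
  have hexp : fliess u c = fun s => c [] + ∑ i, ∑ τ ∈ wordsUpTo N, c (i :: τ) * E u (i :: τ) s :=
    funext fun s => by rw [fliess_eq_sum (hc.mono N.le_succ), sum_wordsUpTo_succ, E_nil, mul_one]
  have hshift : ∀ i, fliess u (lshift i c) t = ∑ τ ∈ wordsUpTo N, c (i :: τ) * E u τ t :=
    fun i => fliess_eq_sum ((hc.lshift i).mono (Nat.sub_le _ _)) t
  rw [hexp]
  simp only [hshift, Finset.mul_sum]
  refine (HasDerivAt.fun_sum fun i _ => HasDerivAt.fun_sum fun τ _ => ?_).const_add _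
  exact ((hasDerivAt_E_cons (hu i) (continuous_E hu τ) t).const_mul (c (i :: τ))).congr_deriv
    (by ring)

theorem fliess_sh (hu : ∀ i, Continuous (u i)) (ha : SupportLengthLT a N)
    (hb : SupportLengthLT b M) : fliess u (sh a b) = fliess u a * fliess u b := by
  induction hn : N + M using Nat.strong_induction_on generalizing a b N M with
  | _ n ih =>
    obtain rfl | hN := Nat.eq_zero_or_pos N
    · simp [ha.eq_zero, sh_zero_left, fliess_zero]
    obtain rfl | hM := Nat.eq_zero_or_pos M
    · simp [hb.eq_zero, sh_zero_right, fliess_zero]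
    -- Both sides have the derivative `Σᵢ uᵢ F_{xᵢ⁻¹(a ⧢ b)}` (by induction) and agree at `0`.
    have hderiv : ∀ t, HasDerivAt (fliess u a * fliess u b)
        (∑ i, u i t * fliess u (lshift i (sh a b)) t) t := fun t => by
      refine ((hasDerivAt_fliess hu ha t).mul (hasDerivAt_fliess hu hb t)).congr_deriv ?_
      simp only [lshift_sh, fliess_add (((ha.lshift _).sh hb).mono (M := N + M) (by omega))
          ((ha.sh (hb.lshift _)).mono (by omega)),
        ih _ (by omega) (ha.lshift _) hb rfl, ih _ (by omega) ha (hb.lshift _) rfl,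
        Pi.mul_apply, Finset.sum_mul, Finset.mul_sum, ← Finset.sum_add_distrib]
      exact Finset.sum_congr rfl fun i _ => by ring
    have hderiv' := hasDerivAt_fliess hu (ha.sh hb)
    refine eq_of_fderiv_eq (fun t => (hderiv' t).differentiableAt)
      (fun t => (hderiv t).differentiableAt) (fun t => ?_) 0 ?_
    · rw [(hderiv' t).hasFDerivAt.fderiv, (hderiv t).hasFDerivAt.fderiv]
    · simp [fliess_apply_zero, sh_nil]

theorem fliess_sum {ι : Type*} {s : Finset ι} {f : ι → Series}
    (hf : ∀ k ∈ s, SupportLengthLT (f k) N) (t : ℝ) :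
    fliess u (∑ k ∈ s, f k) t = ∑ k ∈ s, fliess u (f k) t := by
  rw [fliess_eq_sum (SupportLengthLT.sum hf),
    Finset.sum_congr rfl fun k hk => fliess_eq_sum (hf k hk) t, Finset.sum_comm]
  simp [Finset.sum_apply, Finset.sum_mul]

end Fliess

def homComponent (c : Series) (n : ℕ) : Series := fun η => if degW η = n then c η else 0

theorem supportLengthLT_homComponent (c : Series) (n : ℕ) : SupportLengthLT (homComponent c n) n :=
  fun w hw => by
    by_contra h
    exact hw (if_neg fun hn : degW w = n => h (hn ▸ length_lt_degW w))

theorem homComponent_zero (c : Series) : homComponent c 0 = 0 :=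
  (supportLengthLT_homComponent c 0).eq_zero

theorem sum_homComponent_apply (c : Series) {w : Word} {D : ℕ} (hD : degW w < D) :
    (∑ m ∈ Finset.range D, homComponent c m) w = c w := by
  simp [homComponent, Finset.sum_apply, hD]

theorem add_eq_of_sh_homComponent_ne_zero {a b : Series} {i j : ℕ} {w : Word}
    (h : sh (homComponent a i) (homComponent b j) w ≠ 0) : i + j = degW w + 1 := by
  obtain ⟨v₁, v₂, h₁, h₂, hdeg, -⟩ := exists_of_sh_ne_zero h
  by_cases hi : degW v₁ = i
  · by_cases hj : degW v₂ = j
    · omega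
    · exact absurd (if_neg hj) h₂
  · exact absurd (if_neg hi) h₁

theorem homComponent_sh (a b : Series) (n : ℕ) :
    homComponent (sh a b) n =
      ∑ p ∈ antidiagonal (n + 1), sh (homComponent a p.1) (homComponent b p.2) := by
  funext w
  rw [Finset.sum_apply]
  by_cases hn : degW w = n
  · set R := Finset.range (2 * w.length + 3)
    have htrunc : ∀ c : Series, ∀ v : Word, v.length ≤ w.length →
        c v = (∑ m ∈ R, homComponent c m) v := fun c v hv => by
      have := degW_le_two_mul_length v
      rw [sum_homComponent_apply c (by omega)]
    rw [homComponent, if_pos hn, sh_congr (htrunc a) (htrunc b), sh_sum_left, Finset.sum_apply]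
    simp only [sh_sum_right, Finset.sum_apply, ← Finset.sum_product']
    refine (Finset.sum_subset (fun p hp => ?_) fun p _ hp => ?_).symm
    · have := degW_le_two_mul_length w
      simp only [mem_antidiagonal] at hp
      simp only [R, Finset.mem_product, Finset.mem_range]; omega
    · by_contra h
      exact hp (mem_antidiagonal.2 (hn ▸ add_eq_of_sh_homComponent_ne_zero h))
  · rw [homComponent, if_neg hn]
    refine (Finset.sum_eq_zero fun p hp => by_contra fun h => hn ?_).symm
    have := add_eq_of_sh_homComponent_ne_zero h
    rw [mem_antidiagonal] at hp; omega

theorem lshift_homComponent (i : Fin 2) (c : Series) (n : ℕ) :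
    lshift i (homComponent c n) =
      if degW [i] - 1 ≤ n then homComponent (lshift i c) (n - (degW [i] - 1)) else 0 := by
  funext τ
  simp only [lshift, homComponent, ite_apply, Pi.zero_apply]
  rw [degW_cons]
  split_ifs <;> first | rfl | omega

section FliessSeries

open PowerSeries

variable {u : Fin 2 → ℝ → ℝ}

def fliessSeries (u : Fin 2 → ℝ → ℝ) (c : Series) (t : ℝ) : PowerSeries ℝ :=
  mk fun n => fliess u (homComponent c n) t

theorem coeff_fliessSeries (c : Series) (t : ℝ) (n : ℕ) :
    coeff n (fliessSeries u c t) = fliess u (homComponent c n) t :=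
  coeff_mk _ _

theorem X_mul_fliessSeries_sh (hu : ∀ i, Continuous (u i)) (a b : Series) (t : ℝ) :
    X * fliessSeries u (sh a b) t = fliessSeries u a t * fliessSeries u b t := by
  ext (_ | n)
  · simp [coeff_mul, coeff_fliessSeries, homComponent_zero, fliess_zero]
  · rw [coeff_succ_X_mul, coeff_mul, coeff_fliessSeries, homComponent_sh,
      fliess_sum fun p hp => ((supportLengthLT_homComponent a p.1).sh
        (supportLengthLT_homComponent b p.2)).mono (mem_antidiagonal.1 hp).le]
    simp only [fliess_sh hu (supportLengthLT_homComponent a _) (supportLengthLT_homComponent b _),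
      Pi.mul_apply, coeff_fliessSeries]

theorem hasDerivAt_coeff_fliessSeries (hu : ∀ i, Continuous (u i)) (c : Series) (n : ℕ)
    (t : ℝ) : HasDerivAt (fun s => coeff n (fliessSeries u c s))
      (∑ i, u i t * coeff n (X ^ (degW [i] - 1) * fliessSeries u (lshift i c) t)) t := by
  simp only [coeff_fliessSeries]
  refine (hasDerivAt_fliess hu (supportLengthLT_homComponent c n) t).congr_deriv
    (Finset.sum_congr rfl fun i _ => ?_)
  rw [lshift_homComponent, coeff_X_pow_mul']
  split_ifs <;> simp [coeff_fliessSeries, fliess_zero]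

end FliessSeries

namespace IsAbelSeries

open PowerSeries

variable {e : Series} (he : IsAbelSeries e)
include he

theorem hasDerivAt_coeff_fliessSeries {u : Fin 2 → ℝ → ℝ} (hu : ∀ i, Continuous (u i)) (n : ℕ)
    (t : ℝ) : HasDerivAt (fun s => coeff n (fliessSeries u e s))
      (u 0 t * coeff n (fliessSeries u e t * (fliessSeries u e t * fliessSeries u e t))
        + u 1 t * coeff n (fliessSeries u e t * fliessSeries u e t)) t := by
  have h₁ : X * fliessSeries u (lshift 1 e) t = fliessSeries u e t * fliessSeries u e t := by
    rw [he.lshift_one, X_mul_fliessSeries_sh hu]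
  have h₀ : X ^ 2 * fliessSeries u (lshift 0 e) t =
      fliessSeries u e t * (fliessSeries u e t * fliessSeries u e t) := by
    rw [he.lshift_zero, pow_two, mul_assoc, X_mul_fliessSeries_sh hu, ← mul_assoc,
      X_mul_fliessSeries_sh hu, mul_comm]
  convert Paper.hasDerivAt_coeff_fliessSeries hu e n t using 1
  rw [Fin.sum_univ_two, show degW [0] - 1 = 2 from rfl, show degW [1] - 1 = 1 from rfl, pow_one,
    h₀, h₁]

end IsAbelSeries

theorem exists_continuous_eqOn_Icc {a b : ℝ} (hab : a ≤ b) {f : ℝ → ℝ}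
    (hf : ContinuousOn f (Set.Icc a b)) : ∃ g : ℝ → ℝ, Continuous g ∧ Set.EqOn f g (Set.Icc a b) :=
  ⟨Set.IccExtend hab ((Set.Icc a b).domRestrict f),
    (continuousOn_iff_continuous_domRestrict.1 hf).Icc_extend',
    fun _ hx => (Set.IccExtend_of_mem hab ((Set.Icc a b).domRestrict f) hx).symm⟩

open PowerSeries in
theorem IsAbelSeries.abel_coefficients {e : Series} (he : IsAbelSeries e) {ω : ℝ} (hω : 0 ≤ ω)
    {α β : ℝ → ℝ} (hα : ContinuousOn α (Set.Icc 0 ω)) (hβ : ContinuousOn β (Set.Icc 0 ω)) :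
    let u : Fin 2 → ℝ → ℝ := ![α, β]
    let A : ℕ → ℝ → ℝ := fun n t =>
      ∑' η : Word, (if degW η = n then e η else 0) * E u η t
    (A 1 0 = 1) ∧
    (∀ n : ℕ, 1 < n → A n 0 = 0) ∧
    (∀ n : ℕ, ContinuousOn (A n) (Set.Icc 0 ω)) ∧
    (∀ n : ℕ, ∀ t ∈ Set.Icc (0:ℝ) ω,
      HasDerivWithinAt (A n)
        (α t * ∑ p ∈ antidiagonal n, ∑ q ∈ antidiagonal p.2, A p.1 t * A q.1 t * A q.2 t
         + β t * ∑ p ∈ antidiagonal n, A p.1 t * A p.2 t)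
        (Set.Icc 0 ω) t) := by
  intro u A
  have hu : ∀ i, ContinuousOn (u i) (Set.Icc 0 ω) := Fin.forall_fin_two.2 ⟨hα, hβ⟩
  choose v hv huv using fun i => exists_continuous_eqOn_Icc hω (hu i)
  have hA : ∀ n, Set.EqOn (A n) (fun t => coeff n (fliessSeries v e t)) (Set.Icc 0 ω) :=
    fun n t ht => by
      dsimp only
      rw [coeff_fliessSeries]
      exact tsum_congr fun η => by rw [E_eqOn_of_eqOn huv η ht]; rfl
  have hA0 : ∀ n, A n 0 = if n = 1 then 1 else 0 := fun n => by
    rw [hA n ⟨le_rfl, hω⟩]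
    dsimp only
    rw [coeff_fliessSeries, fliess_apply_zero]
    simp [homComponent, degW_nil, he.apply_nil, eq_comm]
  refine ⟨by simp [hA0], fun n hn => by simp [hA0, hn.ne'], fun n => ?_, fun n t ht => ?_⟩
  · exact (continuous_iff_continuousAt.2 fun t =>
      (he.hasDerivAt_coeff_fliessSeries hv n t).continuousAt).continuousOn.congr (hA n)
  · refine ((he.hasDerivAt_coeff_fliessSeries hv n t).hasDerivWithinAt.congr_of_mem (hA n) ht
      ).congr_deriv ?_
    rw [← huv 0 ht, ← huv 1 ht]
    simp only [hA _ ht, coeff_mul, Finset.mul_sum, mul_assoc]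
    rfl

end Paper

open Paper in
/-- Let `c = Σ_{k≥0} k! x1^k` be the Ferfera series and for `n ≥ 1` let
`a_n := Σ_{η : deg(η) = n} (S a_η)(−c) · η` be the degree-`n` homogeneous component of the
group inverse `(−c)^{∘−1}`.  Then for continuous functions `α, β` on `[0, ω]` and inputs
`u := (u0, u1) = (α, β)`, the functions `a_n(t) := F_{a_n}[u](t)` are exactly the
coefficient functions of the formal power series solution `Φ(t;0;r;u) = Σ_{n≥1} a_n(t) rⁿ`
of the Abel equation `ż = α z³ + β z²`, `z(0) = r`:  they are continuous, satisfy
`a_1(0) = 1` and `a_n(0) = 0` for `n > 1`, and satisfy the ODE order by order in `r`,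
i.e. `a_n' = α Σ_{i+j+k=n} a_i a_j a_k + β Σ_{i+j=n} a_i a_j` on `[0, ω]`. -/
theorem devlin_polynomials_solve_abel_equation
    (Δ : H →ₐ[ℝ] (H ⊗[ℝ] H)) (hΔ : IsFBCoproduct Δ)
    (S : H →ₗ[ℝ] H) (hS : IsAntipode Δ S)
    (ω : ℝ) (hω : 0 < ω) (α β : ℝ → ℝ)
    (hα : ContinuousOn α (Set.Icc 0 ω)) (hβ : ContinuousOn β (Set.Icc 0 ω)) :
    let u : Fin 2 → ℝ → ℝ := ![α, β]
    let A : ℕ → ℝ → ℝ := fun n t =>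
      ∑' η : Word, (if degW η = n then evalS (-ferfera) (S (aw η)) else 0) * E u η t
    (A 1 0 = 1) ∧
    (∀ n : ℕ, 1 < n → A n 0 = 0) ∧
    (∀ n : ℕ, 1 ≤ n → ContinuousOn (A n) (Set.Icc 0 ω)) ∧
    (∀ n : ℕ, 1 ≤ n → ∀ t ∈ Set.Icc (0:ℝ) ω,
      HasDerivWithinAt (A n)
        (α t * ∑ p ∈ Finset.HasAntidiagonal.antidiagonal n, ∑ q ∈ Finset.HasAntidiagonal.antidiagonal p.2,
            A p.1 t * A q.1 t * A q.2 t
         + β t * ∑ p ∈ Finset.HasAntidiagonal.antidiagonal n, A p.1 t * A p.2 t)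
        (Set.Icc 0 ω) t) := by
  have hinv : mcomp (fun η => evalS (-ferfera) (S (aw η))) (-ferfera) = ferfera := by
    rw [mcomp_evalS_antipode hΔ hS, neg_neg]
  obtain ⟨hA₁, hA₀, hcont, hderiv⟩ :=
    (isAbelSeries_of_mcomp_neg_ferfera hinv).abel_coefficients hω.le hα hβ
  exact ⟨hA₁, hA₀, fun n _ => hcont n, fun n _ => hderiv n⟩
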